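/- arXiv:0905.4585 — 2 statements merged into one kernel-verified Lean document; each statement's English description precedes it below -/
import Mathlib

section
/- Let L : ℝ^n × ℝ^{m·k} → ℝ be a smooth regular Lagrangian, ρ^i_α, C^γ_{αβ} : ℝ^n → ℝ structure functions, and suppose smooth functions (ξ_A)^α_B : ℝ^n × ℝ^{m·k} → ℝ satisfy, for each α at every point (q, y): Σ_{A,β,i} y^β_A ρ^i_β(q) ∂²L/∂q^i∂y^α_A + Σ_{A,B,β} (ξ_A)^β_B ∂²L/∂y^α_A∂y^β_B = Σ_i ρ^i_α(q) ∂L/∂q^i + Σ_{A,β,γ} y^β_A C^γ_{βα}(q) ∂L/∂y^γ_A. Let φ^i, φ^α_A : ℝ^k → ℝ be smooth functions satisfying, for all t ∈ ℝ^k: (a) ∂φ^i/∂t^A = Σ_α ρ^i_α(φ(t)) φ^α_A(t); (b) ∂φ^β_B/∂t^A = (ξ_A)^β_B(φ̃(t)), where φ̃ = (φ^i, φ^α_A); (c) ∂φ^α_A/∂t^B − ∂φ^α_B/∂t^A + Σ_{β,γ} C^α_{βγ}(φ(t)) φ^β_B(t) φ^γ_A(t) = 0. Then φ̃ satisfies the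 Euler–Lagrange equations for field theories on Lie algebroids: for each α and all t, Σ_A ∂/∂t^A ( ∂L/∂y^α_A ∘ φ̃ )(t) = Σ_i ρ^i_α(φ(t)) ∂L/∂q^i(φ̃(t)) + Σ_{C,β,γ} φ^β_C(t) C^γ_{βα}(φ(t)) ∂L/∂y^γ_C(φ̃(t)). -/
open scoped BigOperators

noncomputable section

/-- The space `ℝ^n × ℝ^{m·k}` with coordinates `(qⁱ, yᵅ_A)`. -/
abbrev KPt (n m k : ℕ) : Type := (Fin n → ℝ) × (Fin m → Fin k → ℝ)

/-- Partial derivative of `f : ℝ^n → ℝ` in the `i`-th coordinate direction. -/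
noncomputable def pQn {n : ℕ} (f : (Fin n → ℝ) → ℝ) (i : Fin n) (q : Fin n → ℝ) : ℝ :=
  fderiv ℝ f q (Pi.single i 1)

/-- `∂f/∂qⁱ` for `f : ℝ^n × ℝ^{m·k} → ℝ`. -/
noncomputable def pQ {n m k : ℕ} (f : KPt n m k → ℝ) (i : Fin n) (p : KPt n m k) : ℝ :=
  fderiv ℝ f p ((Pi.single i 1 : Fin n → ℝ), (0 : Fin m → Fin k → ℝ))

/-- `∂f/∂yᵅ_A` for `f : ℝ^n × ℝ^{m·k} → ℝ`. -/
noncomputable def pY {n m k : ℕ} (f : KPt n m k → ℝ) (α : Fin m) (A : Fin k) (p : KPt n m k) : ℝ :=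
  fderiv ℝ f p ((0 : Fin n → ℝ), (Pi.single α (Pi.single A 1) : Fin m → Fin k → ℝ))

/-- `∂f/∂t^A` for `f : ℝ^k → ℝ`. -/
noncomputable def pT {k : ℕ} (f : (Fin k → ℝ) → ℝ) (A : Fin k) (t : Fin k → ℝ) : ℝ :=
  fderiv ℝ f t (Pi.single A 1)

/-- Regularity of a Lagrangian: the Hessian in the velocity variables is invertible
at every point. -/
def RegularL {n m k : ℕ} (L : KPt n m k → ℝ) : Prop :=
  ∀ p : KPt n m k,
    IsUnit (Matrix.of (fun a b : Fin m × Fin k => pY (pY L b.1 b.2) a.1 a.2 p) :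
      Matrix (Fin m × Fin k) (Fin m × Fin k) ℝ)

/-- The Legendre transformation associated with a Lagrangian `L`. -/
noncomputable def Leg {n m k : ℕ} (L : KPt n m k → ℝ) (p : KPt n m k) : KPt n m k :=
  (p.1, fun α A => pY L α A p)

/-- The Lagrangian energy `E_L`. -/
noncomputable def EnergyL {n m k : ℕ} (L : KPt n m k → ℝ) (p : KPt n m k) : ℝ :=
  (∑ A : Fin k, ∑ α : Fin m, p.2 α A * pY L α A p) - L p


section Aux

lemma clm_decomp {n m k : ℕ} (ℓ : KPt n m k →L[ℝ] ℝ) (v : KPt n m k) :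
    ℓ v = (∑ i : Fin n, v.1 i * ℓ ((Pi.single i 1 : Fin n → ℝ), 0))
      + ∑ β : Fin m, ∑ B : Fin k, v.2 β B * ℓ (0, (Pi.single β (Pi.single B 1) : Fin m → Fin k → ℝ)) := by
  have hv : v = (∑ i : Fin n, v.1 i • (((Pi.single i 1 : Fin n → ℝ), 0) : KPt n m k))
      + ∑ β : Fin m, ∑ B : Fin k, v.2 β B • ((0, (Pi.single β (Pi.single B 1) : Fin m → Fin k → ℝ)) : KPt n m k) := by
    apply Prod.ext
    · simp only [Prod.fst_add, Prod.fst_sum, Prod.smul_fst, smul_zero, Finset.sum_const_zero,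
        add_zero]
      funext j
      simp [Finset.sum_apply, Pi.single_apply, eq_comm]
    · simp only [Prod.snd_add, Prod.snd_sum, Prod.smul_snd, smul_zero, Finset.sum_const_zero,
        zero_add]
      funext β' B'
      simp [Finset.sum_apply, Pi.single_apply, eq_comm,
        apply_ite (fun f : Fin k → ℝ => f B')]
  conv_lhs => rw [hv]
  simp only [map_add, map_sum, map_smul, smul_eq_mul]

lemma chain_rule {n m k : ℕ} (G : KPt n m k → ℝ) (hG : Differentiable ℝ G)
    (φ : (Fin k → ℝ) → KPt n m k) (hφ : Differentiable ℝ φ) (A : Fin k) (t : Fin k → ℝ) :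
    pT (fun s => G (φ s)) A t
      = (∑ i : Fin n, pT (fun s => (φ s).1 i) A t * pQ G i (φ t))
        + ∑ β : Fin m, ∑ B : Fin k, pT (fun s => (φ s).2 β B) A t * pY G β B (φ t) := by
  have hcomp : fderiv ℝ (fun s => G (φ s)) t
      = (fderiv ℝ G (φ t)).comp (fderiv ℝ φ t) := fderiv_comp t (hG _) (hφ _)
  set v : KPt n m k := fderiv ℝ φ t (Pi.single A 1) with hv
  have h1 : ∀ i : Fin n, pT (fun s => (φ s).1 i) A t = v.1 i := by
    intro i
    have hπ : (fun s => (φ s).1 i)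
        = ⇑((ContinuousLinearMap.proj i).comp
            (ContinuousLinearMap.fst ℝ (Fin n → ℝ) (Fin m → Fin k → ℝ))) ∘ φ := rfl
    unfold pT
    rw [hπ, fderiv_comp t (ContinuousLinearMap.differentiableAt _) (hφ t),
      ContinuousLinearMap.fderiv]
    rfl
  have h2 : ∀ (β : Fin m) (B : Fin k), pT (fun s => (φ s).2 β B) A t = v.2 β B := by
    intro β B
    have hπ : (fun s => (φ s).2 β B)
        = ⇑((ContinuousLinearMap.proj B).comp ((ContinuousLinearMap.proj β).comp
            (ContinuousLinearMap.snd ℝ (Fin n → ℝ) (Fin m → Fin k → ℝ)))) ∘ φ := rfl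
    unfold pT
    rw [hπ, fderiv_comp t (ContinuousLinearMap.differentiableAt _) (hφ t),
      ContinuousLinearMap.fderiv]
    rfl
  simp only [h1, h2]
  unfold pT
  rw [hcomp]
  exact clm_decomp (fderiv ℝ G (φ t)) v

lemma pY_smooth {n m k : ℕ} (L : KPt n m k → ℝ) (hL : ContDiff ℝ (⊤ : ℕ∞) L) (α : Fin m) (A : Fin k) :
    ContDiff ℝ (⊤ : ℕ∞) (pY L α A) := by
  have h1 : ContDiff ℝ (⊤ : ℕ∞) (fderiv ℝ L) := hL.fderiv_right (by simp)
  exact (ContinuousLinearMap.apply ℝ ℝ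
    (((0 : Fin n → ℝ), (Pi.single α (Pi.single A 1) : Fin m → Fin k → ℝ)) : KPt n m k)).contDiff.comp h1

lemma pY_symm {n m k : ℕ} (L : KPt n m k → ℝ) (hL : ContDiff ℝ (⊤ : ℕ∞) L)
    (α β : Fin m) (A B : Fin k) (p : KPt n m k) :
    pY (pY L α A) β B p = pY (pY L β B) α A p := by
  have hsym : IsSymmSndFDerivAt ℝ L p := hL.contDiffAt.isSymmSndFDerivAt (by simpa using (WithTop.coe_le_coe.mpr le_top : (2 : WithTop ℕ∞) ≤ ((⊤ : ℕ∞) : WithTop ℕ∞)))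
  have h1 : ContDiff ℝ (⊤ : ℕ∞) (fderiv ℝ L) := hL.fderiv_right (by simp)
  have key : ∀ w u : KPt n m k,
      fderiv ℝ (fun q => fderiv ℝ L q w) p u = fderiv ℝ (fderiv ℝ L) p u w := by
    intro w u
    have : (fun q => fderiv ℝ L q w)
        = ⇑(ContinuousLinearMap.apply ℝ ℝ w) ∘ (fderiv ℝ L) := rfl
    rw [this, fderiv_comp p (ContinuousLinearMap.differentiableAt _) (h1.differentiable (by simp) p),
      ContinuousLinearMap.fderiv]
    rfl
  unfold pY
  rw [key, key, hsym.eq]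

end Aux

/-- An integral section of a SOPDE solution of the geometric Euler–Lagrange
equations, coming from a Lie algebroid morphism `Tℝ^k → E`, solves the Euler–Lagrange
equations for field theories on Lie algebroids. -/
theorem stmt1 {n m k : ℕ} (L : KPt n m k → ℝ) (hL : ContDiff ℝ (⊤ : ℕ∞) L) (hreg : RegularL L)
    (ρ : Fin n → Fin m → (Fin n → ℝ) → ℝ) (C : Fin m → Fin m → Fin m → (Fin n → ℝ) → ℝ)
    (hρ : ∀ i α, ContDiff ℝ (⊤ : ℕ∞) (ρ i α)) (hC : ∀ γ α β, ContDiff ℝ (⊤ : ℕ∞) (C γ α β))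
    (hCanti : ∀ γ α β q, C γ α β q = - C γ β α q)
    (ξ2 : Fin k → Fin m → Fin k → KPt n m k → ℝ)
    (hξ2 : ∀ A α B, ContDiff ℝ (⊤ : ℕ∞) (ξ2 A α B))
    (hEL : ∀ (p : KPt n m k) (α : Fin m),
      (∑ A : Fin k, ∑ β : Fin m, ∑ i : Fin n,
          p.2 β A * ρ i β p.1 * pQ (pY L α A) i p)
        + (∑ A : Fin k, ∑ B : Fin k, ∑ β : Fin m, ξ2 A β B p * pY (pY L β B) α A p)
      = (∑ i : Fin n, ρ i α p.1 * pQ L i p)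
        + ∑ A : Fin k, ∑ β : Fin m, ∑ γ : Fin m, p.2 β A * C γ β α p.1 * pY L γ A p)
    (φ : (Fin k → ℝ) → KPt n m k) (hφ : ContDiff ℝ (⊤ : ℕ∞) φ)
    (ha : ∀ (i : Fin n) (A : Fin k) (t : Fin k → ℝ),
      pT (fun s => (φ s).1 i) A t = ∑ α : Fin m, ρ i α (φ t).1 * (φ t).2 α A)
    (hb : ∀ (β : Fin m) (B A : Fin k) (t : Fin k → ℝ),
      pT (fun s => (φ s).2 β B) A t = ξ2 A β B (φ t))
    (hc : ∀ (α : Fin m) (A B : Fin k) (t : Fin k → ℝ),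
      pT (fun s => (φ s).2 α A) B t - pT (fun s => (φ s).2 α B) A t
        + ∑ β : Fin m, ∑ γ : Fin m, C α β γ (φ t).1 * (φ t).2 β B * (φ t).2 γ A = 0) :
    ∀ (α : Fin m) (t : Fin k → ℝ),
      (∑ A : Fin k, pT (fun s => pY L α A (φ s)) A t)
      = (∑ i : Fin n, ρ i α (φ t).1 * pQ L i (φ t))
        + ∑ Cc : Fin k, ∑ β : Fin m, ∑ γ : Fin m,
            (φ t).2 β Cc * C γ β α (φ t).1 * pY L γ Cc (φ t) := by
  intro α t
  have hφd : Differentiable ℝ φ := hφ.differentiable (by simp)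
  have hGd : ∀ (α : Fin m) (A : Fin k), Differentiable ℝ (pY L α A) := fun α A =>
    (pY_smooth L hL α A).differentiable (by simp)
  calc
    ∑ A : Fin k, pT (fun s => pY L α A (φ s)) A t
        = ∑ A : Fin k,
            ((∑ i : Fin n, (∑ β : Fin m, ρ i β (φ t).1 * (φ t).2 β A) * pQ (pY L α A) i (φ t))
              + ∑ β : Fin m, ∑ B : Fin k, ξ2 A β B (φ t) * pY (pY L β B) α A (φ t)) := by
      refine Finset.sum_congr rfl fun A _ => ?_
      rw [chain_rule (pY L α A) (hGd α A) φ hφd A t]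
      congr 1
      · exact Finset.sum_congr rfl fun i _ => by rw [ha]
      · refine Finset.sum_congr rfl fun β _ => Finset.sum_congr rfl fun B _ => ?_
        rw [hb, pY_symm L hL α β A B]
    _ = (∑ A : Fin k, ∑ β : Fin m, ∑ i : Fin n,
            (φ t).2 β A * ρ i β (φ t).1 * pQ (pY L α A) i (φ t))
        + ∑ A : Fin k, ∑ B : Fin k, ∑ β : Fin m,
            ξ2 A β B (φ t) * pY (pY L β B) α A (φ t) := by
      rw [Finset.sum_add_distrib]
      congr 1
      · refine Finset.sum_congr rfl fun A _ => ?_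
        rw [Finset.sum_comm]
        refine Finset.sum_congr rfl fun β _ => ?_
        simp only [Finset.sum_mul]
        exact Finset.sum_congr rfl fun i _ => by ring
      · exact Finset.sum_congr rfl fun A _ => Finset.sum_comm
    _ = (∑ i : Fin n, ρ i α (φ t).1 * pQ L i (φ t))
        + ∑ Cc : Fin k, ∑ β : Fin m, ∑ γ : Fin m,
            (φ t).2 β Cc * C γ β α (φ t).1 * pY L γ Cc (φ t) := hEL (φ t) α
end
end

section
/- Let L : ℝ^n × ℝ^{m·k} → ℝ be smooth with Legendre transformation Leg(q, y) = (q^i, ∂L/∂y^α_A(q, y)) a C^∞ diffeomorphism, let ρ^i_α, C^γ_{αβ} : ℝ^n → ℝ be structure functions, and set H = E_L ∘ Leg^{-1} where E_L(q,y) = Σ_{A,α} y^α_A ∂L/∂y^α_A − L. Suppose smooth functions (ξ_A)^α_B : ℝ^n × ℝ^{m·k} → ℝ satisfy, for each α at every point: Σ_{A,β,i} y^β_A ρ^i_β(q) ∂²L/∂q^i∂y^α_A + Σ_{A,B,β} (ξ_A)^β_B ∂²L/∂y^α_A∂y^β_B = Σ_i ρ^i_α(q) ∂L/∂q^i + Σ_{A,β,γ}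 y^β_A C^γ_{βα}(q) ∂L/∂y^γ_A (the local geometric Euler–Lagrange equations for a SOPDE). Define, on the momentum space, ζ^α_A := y^α_A ∘ Leg^{-1} and (ζ_A)^C_γ := ( Σ_{β,i} y^β_A ρ^i_β ∂²L/∂q^i∂y^γ_C + Σ_{β,B} (ξ_A)^β_B ∂²L/∂y^γ_C∂y^β_B ) ∘ Leg^{-1}. Then ζ satisfies the local geometric Hamilton equations: ζ^α_B = ∂H/∂y^B_α for all α, B, and Σ_A (ζ_A)^A_α = −( Σ_{β,δ,B} C^δ_{αβ} y^B_δ ∂H/∂y^B_β + Σ_i ρ^i_α ∂H/∂q^i ) for each α, at every point of the momentum space. -/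
open scoped BigOperators

noncomputable section

section Aux

lemma contDiff_pY' {n m k : ℕ} {L : KPt n m k → ℝ} (hL : ContDiff ℝ (⊤ : ℕ∞) L) (α : Fin m) (A : Fin k) :
    ContDiff ℝ (⊤ : ℕ∞) (pY L α A) :=
  (hL.fderiv_right (by simp)).clm_apply contDiff_const

/-- coordinate projection CLM -/
def cproj {n m k : ℕ} (α : Fin m) (A : Fin k) : KPt n m k →L[ℝ] ℝ :=
  (ContinuousLinearMap.proj A).comp
    ((ContinuousLinearMap.proj α).comp (ContinuousLinearMap.snd ℝ (Fin n → ℝ) (Fin m → Fin k → ℝ)))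

@[simp] lemma cproj_apply {n m k : ℕ} (α : Fin m) (A : Fin k) (u : KPt n m k) :
    cproj α A u = u.2 α A := rfl

def LegD {n m k : ℕ} (L : KPt n m k → ℝ) (x : KPt n m k) : KPt n m k →L[ℝ] KPt n m k :=
  (ContinuousLinearMap.fst ℝ (Fin n → ℝ) (Fin m → Fin k → ℝ)).prod
    (ContinuousLinearMap.pi fun α => ContinuousLinearMap.pi fun A => fderiv ℝ (pY L α A) x)

lemma leg_hasFDerivAt {n m k : ℕ} {L : KPt n m k → ℝ} (hL : ContDiff ℝ (⊤ : ℕ∞) L) (x : KPt n m k) :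
    HasFDerivAt (Leg L) (LegD L x) x :=
  HasFDerivAt.prodMk (hasFDerivAt_fst)
    (hasFDerivAt_pi.2 fun α => hasFDerivAt_pi.2 fun A =>
      (((contDiff_pY' hL α A).differentiable (by simp)) x).hasFDerivAt)

lemma energy_hasFDerivAt {n m k : ℕ} {L : KPt n m k → ℝ} (hL : ContDiff ℝ (⊤ : ℕ∞) L) (x : KPt n m k) :
    HasFDerivAt (EnergyL L)
      ((∑ A : Fin k, ∑ α : Fin m,
          (x.2 α A • fderiv ℝ (pY L α A) x + pY L α A x • cproj α A)) - fderiv ℝ L x) x := by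
  have h1 : ∀ (A : Fin k) (α : Fin m),
      HasFDerivAt (fun y : KPt n m k => y.2 α A * pY L α A y)
        (x.2 α A • fderiv ℝ (pY L α A) x + pY L α A x • cproj α A) x :=
    fun A α => (cproj α A).hasFDerivAt.mul
      (((contDiff_pY' hL α A).differentiable (by simp) x).hasFDerivAt)
  exact (HasFDerivAt.fun_sum fun A _ => HasFDerivAt.fun_sum fun α _ => h1 A α).fun_sub
    ((hL.differentiable (by simp) x).hasFDerivAt)

lemma kpt_decomp {n m k : ℕ} (u : KPt n m k) :
    u = (∑ i : Fin n, u.1 i • ((Pi.single i 1 : Fin n → ℝ), (0 : Fin m → Fin k → ℝ)))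
      + ∑ A : Fin k, ∑ α : Fin m,
          u.2 α A • ((0 : Fin n → ℝ), (Pi.single α (Pi.single A 1) : Fin m → Fin k → ℝ)) := by
  ext j
  · simp [Finset.sum_apply, Pi.single_apply, Prod.fst_sum]
  · rename_i B
    simp only [Prod.snd_add, Prod.snd_sum, Prod.smul_snd, Finset.sum_apply, Pi.smul_apply,
      Pi.single_apply, smul_eq_mul, Prod.fst_add, Prod.fst_sum, Prod.smul_fst, smul_zero,
      Pi.zero_apply, mul_ite, mul_one, mul_zero]
    rw [Finset.sum_comm]
    simp [Pi.single_apply, ite_apply, Finset.sum_ite_eq']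

lemma clm_eval {n m k : ℕ} (φ : KPt n m k →L[ℝ] ℝ) (u : KPt n m k) :
    φ u = (∑ i : Fin n, u.1 i * φ ((Pi.single i 1 : Fin n → ℝ), 0))
      + ∑ A : Fin k, ∑ α : Fin m, u.2 α A * φ (0, (Pi.single α (Pi.single A 1))) := by
  conv_lhs => rw [kpt_decomp u]
  simp only [map_add, map_sum, map_smul, smul_eq_mul]

lemma keyH {n m k : ℕ} {L : KPt n m k → ℝ} (hL : ContDiff ℝ (⊤ : ℕ∞) L)
    {G : KPt n m k → KPt n m k} (hG : ContDiff ℝ (⊤ : ℕ∞) G)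
    (hLG : Function.RightInverse G (Leg L))
    {H : KPt n m k → ℝ} (hHdef : ∀ p, H p = EnergyL L (G p)) (p w : KPt n m k) :
    fderiv ℝ H p w
      = (∑ A : Fin k, ∑ α : Fin m, (G p).2 α A * w.2 α A)
        - ∑ i : Fin n, w.1 i * pQ L i (G p) := by
  set x := G p with hx
  have hDG : DifferentiableAt ℝ G p := hG.differentiable (by simp) p
  have hDE := energy_hasFDerivAt hL x
  have hHG : H = (EnergyL L) ∘ G := funext hHdef
  have hfH : fderiv ℝ H p = (fderiv ℝ (EnergyL L) x).comp (fderiv ℝ G p) := by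
    rw [hHG]; exact fderiv_comp p hDE.differentiableAt hDG
  have hLegG : (Leg L) ∘ G = id := funext hLG
  have hcomp : (fderiv ℝ (Leg L) x).comp (fderiv ℝ G p) = ContinuousLinearMap.id ℝ _ := by
    rw [← fderiv_comp p (leg_hasFDerivAt hL x).differentiableAt hDG, hLegG, fderiv_id]
  set u := fderiv ℝ G p w with hu'
  have hu : (LegD L x) u = w := by
    have h1 : fderiv ℝ (Leg L) x = LegD L x := (leg_hasFDerivAt hL x).fderiv
    have := congrFun (congrArg
      (fun φ : KPt n m k →L[ℝ] KPt n m k => (φ : KPt n m k → KPt n m k)) hcomp) w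
    simpa [h1] using this
  have hu1 : u.1 = w.1 := by
    have := congrArg Prod.fst hu
    simpa [LegD] using this
  have hu2 : ∀ (α : Fin m) (A : Fin k), fderiv ℝ (pY L α A) x u = w.2 α A := by
    intro α A
    have := congrArg Prod.snd hu
    have := congrFun (congrFun this α) A
    simpa [LegD] using this
  have hEL : fderiv ℝ L x u
      = (∑ i : Fin n, u.1 i * pQ L i x) + ∑ A : Fin k, ∑ α : Fin m, u.2 α A * pY L α A x :=
    clm_eval _ u
  rw [hfH]
  show fderiv ℝ (EnergyL L) x u = _
  rw [hDE.fderiv]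
  simp only [ContinuousLinearMap.coe_sub', Pi.sub_apply, ContinuousLinearMap.sum_apply,
    ContinuousLinearMap.add_apply, ContinuousLinearMap.smul_apply, smul_eq_mul, cproj_apply,
    hEL, hu1]
  simp only [hu2]
  rw [Finset.sum_congr rfl fun A _ => Finset.sum_add_distrib]
  rw [Finset.sum_add_distrib]
  ring_nf
  rw [Finset.sum_congr rfl fun A _ =>
    Finset.sum_congr rfl fun α _ => mul_comm (pY L α A x) (u.2 α A)]
  ring

lemma pYH {n m k : ℕ} {L : KPt n m k → ℝ} (hL : ContDiff ℝ (⊤ : ℕ∞) L)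
    {G : KPt n m k → KPt n m k} (hG : ContDiff ℝ (⊤ : ℕ∞) G)
    (hLG : Function.RightInverse G (Leg L))
    {H : KPt n m k → ℝ} (hHdef : ∀ p, H p = EnergyL L (G p)) (p : KPt n m k)
    (α : Fin m) (B : Fin k) : pY H α B p = (G p).2 α B := by
  rw [pY, keyH hL hG hLG hHdef]
  simp [Pi.single_apply, ite_apply, mul_ite, Finset.sum_ite_eq']

lemma pQH {n m k : ℕ} {L : KPt n m k → ℝ} (hL : ContDiff ℝ (⊤ : ℕ∞) L)
    {G : KPt n m k → KPt n m k} (hG : ContDiff ℝ (⊤ : ℕ∞) G)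
    (hLG : Function.RightInverse G (Leg L))
    {H : KPt n m k → ℝ} (hHdef : ∀ p, H p = EnergyL L (G p)) (p : KPt n m k)
    (i : Fin n) : pQ H i p = - pQ L i (G p) := by
  rw [pQ, keyH hL hG hLG hHdef]
  simp [Pi.single_apply, Finset.sum_ite_eq']

lemma sum_reorder {m k : ℕ} (f : Fin m → Fin m → Fin k → ℝ) :
    (∑ β : Fin m, ∑ δ : Fin m, ∑ B : Fin k, f β δ B)
      = ∑ B : Fin k, ∑ β : Fin m, ∑ δ : Fin m, f β δ B := by
  rw [Finset.sum_congr rfl fun β _ => Finset.sum_comm, Finset.sum_comm]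

end Aux

/-- Pushing a solution of the local geometric Euler–Lagrange equations
forward by the Legendre transformation yields a solution of the local geometric Hamilton
equations. -/
theorem stmt8 {n m k : ℕ} (L : KPt n m k → ℝ) (hL : ContDiff ℝ (⊤ : ℕ∞) L)
    (ρ : Fin n → Fin m → (Fin n → ℝ) → ℝ) (C : Fin m → Fin m → Fin m → (Fin n → ℝ) → ℝ)
    (hρ : ∀ i α, ContDiff ℝ (⊤ : ℕ∞) (ρ i α)) (hC : ∀ γ α β, ContDiff ℝ (⊤ : ℕ∞) (C γ α β))
    (hCanti : ∀ γ α β q, C γ α β q = - C γ β α q)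
    (G : KPt n m k → KPt n m k) (hG : ContDiff ℝ (⊤ : ℕ∞) G)
    (hGL : Function.LeftInverse G (Leg L)) (hLG : Function.RightInverse G (Leg L))
    (H : KPt n m k → ℝ) (hHdef : ∀ p, H p = EnergyL L (G p))
    (ξ2 : Fin k → Fin m → Fin k → KPt n m k → ℝ)
    (hξ2 : ∀ A α B, ContDiff ℝ (⊤ : ℕ∞) (ξ2 A α B))
    (hEL : ∀ (p : KPt n m k) (α : Fin m),
      (∑ A : Fin k, ∑ β : Fin m, ∑ i : Fin n,
          p.2 β A * ρ i β p.1 * pQ (pY L α A) i p)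
        + (∑ A : Fin k, ∑ B : Fin k, ∑ β : Fin m, ξ2 A β B p * pY (pY L β B) α A p)
      = (∑ i : Fin n, ρ i α p.1 * pQ L i p)
        + ∑ A : Fin k, ∑ β : Fin m, ∑ γ : Fin m, p.2 β A * C γ β α p.1 * pY L γ A p)
    (ζ : Fin m → Fin k → KPt n m k → ℝ)
    (hζdef : ∀ (α : Fin m) (A : Fin k) (p : KPt n m k), ζ α A p = (G p).2 α A)
    (ζ2 : Fin k → Fin m → Fin k → KPt n m k → ℝ)
    (hζ2def : ∀ (A : Fin k) (γ : Fin m) (Cc : Fin k) (p : KPt n m k),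
      ζ2 A γ Cc p =
        (∑ β : Fin m, ∑ i : Fin n,
            (G p).2 β A * ρ i β (G p).1 * pQ (pY L γ Cc) i (G p))
          + ∑ β : Fin m, ∑ B : Fin k, ξ2 A β B (G p) * pY (pY L β B) γ Cc (G p)) :
    (∀ (p : KPt n m k) (α : Fin m) (B : Fin k), ζ α B p = pY H α B p) ∧
    (∀ (p : KPt n m k) (α : Fin m),
      (∑ A : Fin k, ζ2 A α A p)
      = -((∑ β : Fin m, ∑ δ : Fin m, ∑ B : Fin k, C δ α β p.1 * p.2 δ B * pY H β B p)
          + ∑ i : Fin n, ρ i α p.1 * pQ H i p)) := by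
  constructor
  · intro p α B
    rw [hζdef, pYH hL hG hLG hHdef]
  · intro p α
    have hx := hLG p
    have hp1 : p.1 = (G p).1 := by
      conv_lhs => rw [← hx]
      rfl
    have hp2 : ∀ (δ : Fin m) (B : Fin k), p.2 δ B = pY L δ B (G p) := by
      intro δ B
      conv_lhs => rw [← hx]
      rfl
    have h1 : (∑ A : Fin k, ζ2 A α A p)
        = (∑ A : Fin k, ∑ β : Fin m, ∑ i : Fin n,
            (G p).2 β A * ρ i β (G p).1 * pQ (pY L α A) i (G p))
          + ∑ A : Fin k, ∑ B : Fin k, ∑ β : Fin m,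
              ξ2 A β B (G p) * pY (pY L β B) α A (G p) := by
      simp only [hζ2def]
      rw [Finset.sum_add_distrib]
      congr 1
      exact Finset.sum_congr rfl fun A _ => Finset.sum_comm
    have h2 : (∑ β : Fin m, ∑ δ : Fin m, ∑ B : Fin k, C δ α β p.1 * p.2 δ B * pY H β B p)
        = -(∑ A : Fin k, ∑ β : Fin m, ∑ γ : Fin m,
            (G p).2 β A * C γ β α (G p).1 * pY L γ A (G p)) := by
      have hterm : ∀ (β δ : Fin m) (B : Fin k),
          C δ α β p.1 * p.2 δ B * pY H β B p
            = -((G p).2 β B * C δ β α (G p).1 * pY L δ B (G p)) := by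
        intro β δ B
        rw [pYH hL hG hLG hHdef, hp1, hp2, hCanti]
        ring
      calc (∑ β : Fin m, ∑ δ : Fin m, ∑ B : Fin k, C δ α β p.1 * p.2 δ B * pY H β B p)
          = ∑ β : Fin m, ∑ δ : Fin m, ∑ B : Fin k,
              -((G p).2 β B * C δ β α (G p).1 * pY L δ B (G p)) := by
            exact Finset.sum_congr rfl fun β _ => Finset.sum_congr rfl fun δ _ =>
              Finset.sum_congr rfl fun B _ => hterm β δ B
        _ = -(∑ β : Fin m, ∑ δ : Fin m, ∑ B : Fin k,
              (G p).2 β B * C δ β α (G p).1 * pY L δ B (G p)) := by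
            simp [Finset.sum_neg_distrib]
        _ = -(∑ A : Fin k, ∑ β : Fin m, ∑ γ : Fin m,
              (G p).2 β A * C γ β α (G p).1 * pY L γ A (G p)) := by
            rw [sum_reorder]
    have h3 : (∑ i : Fin n, ρ i α p.1 * pQ H i p)
        = -(∑ i : Fin n, ρ i α (G p).1 * pQ L i (G p)) := by
      rw [← Finset.sum_neg_distrib]
      exact Finset.sum_congr rfl fun i _ => by
        rw [pQH hL hG hLG hHdef, hp1]; ring
    rw [h1, hEL (G p) α, h2, h3]
    ring
end
end
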